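/- arXiv:2212.01533 — 5 statements merged into one kernel-verified Lean document; each statement's English description precedes it below -/
import Mathlib

section
/- Let X and Y be nonempty finite sets and let μ and ν be normalized capacities on X and Y respectively. Then the set Π_Ch(μ,ν) of capacities on X × Y with marginals μ and ν is nonempty; that is, there exists a capacity π on X × Y with π(A × Y) = μ(A) for all A ⊆ X and π(X × B) = ν(B) for all B ⊆ Y. -/
open Finset MeasureTheory

/-- A capacity on a finite set `Z`: a monotone set function vanishing on `∅`. -/
def IsCapacity {Z : Type*} (γ : Finset Z → ℝ) : Prop :=
  γ ∅ = 0 ∧ ∀ A B : Finset Z, A ⊆ B → γ A ≤ γ B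

/-- A normalized capacity: a capacity with `γ(Z) = 1`. -/
def IsNormalizedCapacity {Z : Type*} [Fintype Z] (γ : Finset Z → ℝ) : Prop :=
  IsCapacity γ ∧ γ Finset.univ = 1

/-- Membership of a capacity `π` on `X × Y` in `Π_Ch(μ, ν)`:
`π` is a capacity whose marginals are `μ` and `ν`. -/
def InPiCh {X Y : Type*} [Fintype X] [Fintype Y]
    (μ : Finset X → ℝ) (ν : Finset Y → ℝ) (π : Finset (X × Y) → ℝ) : Prop :=
  IsCapacity π ∧ (∀ A : Finset X, π (A ×ˢ Finset.univ) = μ A) ∧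
    (∀ B : Finset Y, π (Finset.univ ×ˢ B) = ν B)

/-!
Take `π(S) = max (μ R, ν C)`, where `R` is the set of rows `{x} × Y` and `C` the set of columns
`X × {y}` entirely contained in `S`. Both row and column sets grow with `S`, so `π` is a capacity.
A cylinder `A × Y` with `A ≠ X` contains every row over `A` and no column, so its value is
`max (μ A, ν ∅) = μ A`; for `A = X` both terms equal `1`. Cylinders `X × B` are symmetric.
-/

theorem IsCapacity.nonneg {Z : Type*} {γ : Finset Z → ℝ} (hγ : IsCapacity γ) (A : Finset Z) :
    0 ≤ γ A :=
  hγ.1 ▸ hγ.2 ∅ A (empty_subset A)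

section FullLines

variable {X Y : Type*} [Fintype X] [Fintype Y]

open Classical in
noncomputable def fullRows (S : Finset (X × Y)) : Finset X :=
  {x | ∀ y, (x, y) ∈ S}

open Classical in
noncomputable def fullCols (S : Finset (X × Y)) : Finset Y :=
  {y | ∀ x, (x, y) ∈ S}

@[simp]
theorem mem_fullRows {S : Finset (X × Y)} {x : X} : x ∈ fullRows S ↔ ∀ y, (x, y) ∈ S := by
  simp [fullRows]

@[simp]
theorem mem_fullCols {S : Finset (X × Y)} {y : Y} : y ∈ fullCols S ↔ ∀ x, (x, y) ∈ S := by
  simp [fullCols]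

theorem fullRows_mono : Monotone (fullRows : Finset (X × Y) → Finset X) :=
  fun _ _ hST _ hx => mem_fullRows.2 fun y => hST (mem_fullRows.1 hx y)

theorem fullCols_mono : Monotone (fullCols : Finset (X × Y) → Finset Y) :=
  fun _ _ hST _ hy => mem_fullCols.2 fun x => hST (mem_fullCols.1 hy x)

theorem fullRows_product_univ [Nonempty Y] (A : Finset X) :
    fullRows (A ×ˢ (univ : Finset Y)) = A := by
  ext x
  simp

theorem fullCols_univ_product [Nonempty X] (B : Finset Y) :
    fullCols ((univ : Finset X) ×ˢ B) = B := by
  ext y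
  simp

theorem fullCols_product_univ_of_ne_univ {A : Finset X} (hA : A ≠ univ) :
    fullCols (A ×ˢ (univ : Finset Y)) = ∅ := by
  ext y
  simpa [eq_univ_iff_forall] using hA

theorem fullRows_univ_product_of_ne_univ {B : Finset Y} (hB : B ≠ univ) :
    fullRows ((univ : Finset X) ×ˢ B) = ∅ := by
  ext x
  simpa [eq_univ_iff_forall] using hB

theorem fullRows_univ : fullRows (univ : Finset (X × Y)) = univ := by
  ext x
  simp

theorem fullCols_univ : fullCols (univ : Finset (X × Y)) = univ := by
  ext y
  simp

end FullLines

section SupCoupling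

variable {X Y : Type*} [Fintype X] [Fintype Y] {μ : Finset X → ℝ} {ν : Finset Y → ℝ}

noncomputable def supCoupling (μ : Finset X → ℝ) (ν : Finset Y → ℝ) (S : Finset (X × Y)) : ℝ :=
  μ (fullRows S) ⊔ ν (fullCols S)

theorem isCapacity_supCoupling [Nonempty X] [Nonempty Y] (hμ : IsCapacity μ) (hν : IsCapacity ν) :
    IsCapacity (supCoupling μ ν) := by
  refine ⟨?_, fun S T hST => sup_le_sup (hμ.2 _ _ (fullRows_mono hST)) (hν.2 _ _ (fullCols_mono hST))⟩
  have hrows : fullRows (∅ : Finset (X × Y)) = ∅ := by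
    simpa using fullRows_product_univ (Y := Y) (∅ : Finset X)
  have hcols : fullCols (∅ : Finset (X × Y)) = ∅ := by
    simpa using fullCols_univ_product (X := X) (∅ : Finset Y)
  simp [supCoupling, hrows, hcols, hμ.1, hν.1]

theorem supCoupling_product_univ [Nonempty Y] (hμ : IsCapacity μ) (hν : IsCapacity ν)
    (hμν : μ univ = ν univ) (A : Finset X) : supCoupling μ ν (A ×ˢ univ) = μ A := by
  rcases eq_or_ne A univ with rfl | hA
  · simp [supCoupling, fullRows_univ, fullCols_univ, hμν]
  · simp [supCoupling, fullRows_product_univ, fullCols_product_univ_of_ne_univ hA, hν.1,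
      hμ.nonneg A]

theorem supCoupling_univ_product [Nonempty X] (hμ : IsCapacity μ) (hν : IsCapacity ν)
    (hμν : μ univ = ν univ) (B : Finset Y) : supCoupling μ ν (univ ×ˢ B) = ν B := by
  rcases eq_or_ne B univ with rfl | hB
  · simp [supCoupling, fullRows_univ, fullCols_univ, hμν]
  · simp [supCoupling, fullCols_univ_product, fullRows_univ_product_of_ne_univ hB, hμ.1,
      hν.nonneg B]

theorem inPiCh_supCoupling [Nonempty X] [Nonempty Y] (hμ : IsCapacity μ) (hν : IsCapacity ν)
    (hμν : μ univ = ν univ) : InPiCh μ ν (supCoupling μ ν) :=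
  ⟨isCapacity_supCoupling hμ hν, supCoupling_product_univ hμ hν hμν,
    supCoupling_univ_product hμ hν hμν⟩

end SupCoupling

/-- For nonempty finite `X`, `Y` and normalized capacities `μ`, `ν`,
the set `Π_Ch(μ, ν)` is nonempty. -/
theorem piCh_nonempty {X Y : Type*} [Fintype X] [Fintype Y] [Nonempty X] [Nonempty Y]
    (μ : Finset X → ℝ) (ν : Finset Y → ℝ)
    (hμ : IsNormalizedCapacity μ) (hν : IsNormalizedCapacity ν) :
    ∃ π : Finset (X × Y) → ℝ, InPiCh μ ν π :=
  ⟨supCoupling μ ν, inPiCh_supCoupling hμ.1 hν.1 (hμ.2.trans hν.2.symm)⟩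
end

section
/- Let X and Y be nonempty finite sets and let μ and ν be normalized capacities on X and Y respectively. The set function π^* on subsets of X × Y defined by π^*(N) = min(μ(N_X), ν(N_Y)) is a normalized capacity on X × Y and belongs to Π_Ch(μ,ν). -/
open Finset MeasureTheory

/-- Projection of `N ⊆ X × Y` onto `X`. -/
def projX {X Y : Type*} [DecidableEq X] (N : Finset (X × Y)) : Finset X :=
  N.image Prod.fst

/-- Projection of `N ⊆ X × Y` onto `Y`. -/
def projY {X Y : Type*} [DecidableEq Y] (N : Finset (X × Y)) : Finset Y :=
  N.image Prod.snd

/-- Full-fiber projection of `N ⊆ X × Y` onto `X`: points `x` with `(x, y) ∈ N` for all `y`. -/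
def tprojX {X Y : Type*} [Fintype X] [Fintype Y] [DecidableEq X] [DecidableEq Y]
    (N : Finset (X × Y)) : Finset X :=
  Finset.univ.filter (fun x => ∀ y : Y, (x, y) ∈ N)

/-- Full-fiber projection of `N ⊆ X × Y` onto `Y`: points `y` with `(x, y) ∈ N` for all `x`. -/
def tprojY {X Y : Type*} [Fintype X] [Fintype Y] [DecidableEq X] [DecidableEq Y]
    (N : Finset (X × Y)) : Finset Y :=
  Finset.univ.filter (fun y => ∀ x : X, (x, y) ∈ N)

namespace IsCapacity

variable {Z W : Type*}

theorem comp_image [DecidableEq W] {γ : Finset W → ℝ} (hγ : IsCapacity γ) (f : Z → W) :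
    IsCapacity (fun N : Finset Z => γ (N.image f)) :=
  ⟨by simp only [image_empty, hγ.1], fun _ _ hAB => hγ.2 _ _ (image_subset_image hAB)⟩

theorem min {γ δ : Finset Z → ℝ} (hγ : IsCapacity γ) (hδ : IsCapacity δ) :
    IsCapacity (fun A => min (γ A) (δ A)) :=
  ⟨by simp only [hγ.1, hδ.1, min_self],
    fun A B hAB => min_le_min (hγ.2 A B hAB) (hδ.2 A B hAB)⟩

end IsCapacity

theorem IsNormalizedCapacity.le_one {Z : Type*} [Fintype Z] {γ : Finset Z → ℝ}
    (hγ : IsNormalizedCapacity γ) (A : Finset Z) : γ A ≤ 1 :=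
  hγ.2 ▸ hγ.1.2 A univ (subset_univ A)

theorem IsNormalizedCapacity.univ_nonempty {Z : Type*} [Fintype Z] {γ : Finset Z → ℝ}
    (hγ : IsNormalizedCapacity γ) : (univ : Finset Z).Nonempty :=
  nonempty_iff_ne_empty.2 fun h => by simpa [h, hγ.1.1] using hγ.2

section Marginals

variable {X Y : Type*} [Fintype X] [Fintype Y] [DecidableEq X] [DecidableEq Y]
  {μ : Finset X → ℝ} {ν : Finset Y → ℝ}

theorem min_projX_projY_product_univ (hμ : IsNormalizedCapacity μ)
    (hν : IsNormalizedCapacity ν) (A : Finset X) :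
    min (μ (projX (A ×ˢ (univ : Finset Y)))) (ν (projY (A ×ˢ (univ : Finset Y)))) = μ A := by
  rcases A.eq_empty_or_nonempty with rfl | hA
  · simp [projX, projY, hμ.1.1, hν.1.1]
  · rw [projX, projY, product_image_fst hν.univ_nonempty, product_image_snd hA, hν.2,
      min_eq_left (hμ.le_one A)]

theorem min_projX_projY_univ_product (hμ : IsNormalizedCapacity μ)
    (hν : IsNormalizedCapacity ν) (B : Finset Y) :
    min (μ (projX ((univ : Finset X) ×ˢ B))) (ν (projY ((univ : Finset X) ×ˢ B))) = ν B := by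
  rcases B.eq_empty_or_nonempty with rfl | hB
  · simp [projX, projY, hμ.1.1, hν.1.1]
  · rw [projX, projY, product_image_fst hB, product_image_snd hμ.univ_nonempty, hμ.2,
      min_eq_right (hν.le_one B)]

end Marginals

theorem piUpper_mem_piCh_general {X Y : Type*} [Fintype X] [Fintype Y]
    [DecidableEq X] [DecidableEq Y]
    (μ : Finset X → ℝ) (ν : Finset Y → ℝ)
    (hμ : IsNormalizedCapacity μ) (hν : IsNormalizedCapacity ν) :
    IsNormalizedCapacity (fun N : Finset (X × Y) => min (μ (projX N)) (ν (projY N))) ∧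
      InPiCh μ ν (fun N : Finset (X × Y) => min (μ (projX N)) (ν (projY N))) := by
  have hcap : IsCapacity (fun N : Finset (X × Y) => min (μ (projX N)) (ν (projY N))) :=
    (hμ.1.comp_image Prod.fst).min (hν.1.comp_image Prod.snd)
  have hmarginalX := min_projX_projY_product_univ hμ hν
  have hnormalized :
      min (μ (projX (univ : Finset (X × Y)))) (ν (projY (univ : Finset (X × Y)))) = 1 := by
    rw [← univ_product_univ, hmarginalX, hμ.2]
  exact ⟨⟨hcap, hnormalized⟩, hcap, hmarginalX, min_projX_projY_univ_product hμ hν⟩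

/-- `π^*(N) = min(μ(N_X), ν(N_Y))` is a normalized capacity on `X × Y`
belonging to `Π_Ch(μ, ν)`. -/
theorem piUpper_mem_piCh {X Y : Type*} [Fintype X] [Fintype Y] [Nonempty X] [Nonempty Y]
    [DecidableEq X] [DecidableEq Y]
    (μ : Finset X → ℝ) (ν : Finset Y → ℝ)
    (hμ : IsNormalizedCapacity μ) (hν : IsNormalizedCapacity ν) :
    IsNormalizedCapacity (fun N : Finset (X × Y) => min (μ (projX N)) (ν (projY N))) ∧
      InPiCh μ ν (fun N : Finset (X × Y) => min (μ (projX N)) (ν (projY N))) :=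
  piUpper_mem_piCh_general μ ν hμ hν
end

section
/- Let X and Y be nonempty finite sets and let μ and ν be normalized capacities on X and Y respectively. The set function π_* on subsets of X × Y defined by π_*(N) = max(μ(Ñ_X), ν(Ñ_Y)) is a normalized capacity on X × Y and belongs to Π_Ch(μ,ν). -/
open Finset MeasureTheory

/-! `π_*` is the maximum of `μ` and `ν` pulled back along the full-fiber projections, which are
monotone and send `∅` to `∅`, so it is a capacity. On a cylinder `A × Y` the projection onto `X`
gives back `A`, while the projection onto `Y` is empty unless `A = X`; so the `ν`-term is `0`
(or `1 = μ X` when `A = X`) and the maximum is `μ A`. -/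

namespace IsCapacity

variable {Z W : Type*}

theorem nonneg_s5 {γ : Finset Z → ℝ} (hγ : IsCapacity γ) (A : Finset Z) : 0 ≤ γ A :=
  hγ.1 ▸ hγ.2 ∅ A (empty_subset A)

theorem comp {γ : Finset Z → ℝ} (hγ : IsCapacity γ) {f : Finset W → Finset Z}
    (hf : Monotone f) (hf₀ : f ∅ = ∅) : IsCapacity (γ ∘ f) :=
  ⟨by simp [hf₀, hγ.1], fun _ _ hAB => hγ.2 _ _ (hf hAB)⟩

theorem max {γ δ : Finset Z → ℝ} (hγ : IsCapacity γ) (hδ : IsCapacity δ) :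
    IsCapacity (fun A => max (γ A) (δ A)) :=
  ⟨by simp [hγ.1, hδ.1], fun A B hAB => max_le_max (hγ.2 A B hAB) (hδ.2 A B hAB)⟩

end IsCapacity

section FullFiber

variable {X Y : Type*} [Fintype X] [Fintype Y] [DecidableEq X] [DecidableEq Y]

theorem tprojX_mono : Monotone (tprojX : Finset (X × Y) → Finset X) :=
  fun _ _ hNM _ hx => by
    simp only [tprojX, mem_filter, mem_univ, true_and] at hx ⊢
    exact fun y => hNM (hx y)

theorem tprojY_mono : Monotone (tprojY : Finset (X × Y) → Finset Y) :=
  fun _ _ hNM _ hy => by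
    simp only [tprojY, mem_filter, mem_univ, true_and] at hy ⊢
    exact fun x => hNM (hy x)

@[simp]
theorem tprojX_empty [Nonempty Y] : tprojX (∅ : Finset (X × Y)) = ∅ := by
  ext; simp [tprojX]

@[simp]
theorem tprojY_empty [Nonempty X] : tprojY (∅ : Finset (X × Y)) = ∅ := by
  ext; simp [tprojY]

@[simp]
theorem tprojX_univ : tprojX (univ : Finset (X × Y)) = univ := by
  ext; simp [tprojX]

@[simp]
theorem tprojY_univ : tprojY (univ : Finset (X × Y)) = univ := by
  ext; simp [tprojY]

@[simp]
theorem tprojX_product_univ [Nonempty Y] (A : Finset X) :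
    tprojX (A ×ˢ (univ : Finset Y)) = A := by
  ext; simp [tprojX]

@[simp]
theorem tprojY_univ_product [Nonempty X] (B : Finset Y) :
    tprojY ((univ : Finset X) ×ˢ B) = B := by
  ext; simp [tprojY]

theorem tprojY_product_univ_of_ne_univ {A : Finset X} (hA : A ≠ univ) :
    tprojY (A ×ˢ (univ : Finset Y)) = ∅ := by
  obtain ⟨x, hx⟩ := not_forall.1 (mt eq_univ_iff_forall.2 hA)
  ext y
  simp only [tprojY, mem_filter, mem_univ, true_and, mem_product, and_true, notMem_empty,
    iff_false, not_forall]
  exact ⟨x, hx⟩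

theorem tprojX_univ_product_of_ne_univ {B : Finset Y} (hB : B ≠ univ) :
    tprojX ((univ : Finset X) ×ˢ B) = ∅ := by
  obtain ⟨y, hy⟩ := not_forall.1 (mt eq_univ_iff_forall.2 hB)
  ext x
  simp only [tprojX, mem_filter, mem_univ, true_and, mem_product, notMem_empty,
    iff_false, not_forall]
  exact ⟨y, hy⟩

end FullFiber

section PiLower

variable {X Y : Type*} [Fintype X] [Fintype Y] [DecidableEq X] [DecidableEq Y]

def piLower (μ : Finset X → ℝ) (ν : Finset Y → ℝ) (N : Finset (X × Y)) : ℝ :=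
  max (μ (tprojX N)) (ν (tprojY N))

variable {μ : Finset X → ℝ} {ν : Finset Y → ℝ}

theorem piLower_univ (hμ : IsNormalizedCapacity μ) (hν : IsNormalizedCapacity ν) :
    piLower μ ν univ = 1 := by
  simp [piLower, hμ.2, hν.2]

theorem isCapacity_piLower [Nonempty X] [Nonempty Y] (hμ : IsCapacity μ) (hν : IsCapacity ν) :
    IsCapacity (piLower μ ν) :=
  (hμ.comp tprojX_mono tprojX_empty).max (hν.comp tprojY_mono tprojY_empty)

theorem piLower_product_univ [Nonempty Y] (hμ : IsNormalizedCapacity μ)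
    (hν : IsNormalizedCapacity ν) (A : Finset X) : piLower μ ν (A ×ˢ univ) = μ A := by
  rcases eq_or_ne A univ with rfl | hA
  · rw [univ_product_univ, piLower_univ hμ hν, hμ.2]
  · rw [piLower, tprojX_product_univ, tprojY_product_univ_of_ne_univ hA, hν.1.1]
    exact max_eq_left (hμ.1.nonneg_s5 A)

theorem piLower_univ_product [Nonempty X] (hμ : IsNormalizedCapacity μ)
    (hν : IsNormalizedCapacity ν) (B : Finset Y) : piLower μ ν (univ ×ˢ B) = ν B := by
  rcases eq_or_ne B univ with rfl | hB
  · rw [univ_product_univ, piLower_univ hμ hν, hν.2]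
  · rw [piLower, tprojY_univ_product, tprojX_univ_product_of_ne_univ hB, hμ.1.1]
    exact max_eq_right (hν.1.nonneg_s5 B)

end PiLower

/-- `π_*(N) = max(μ(Ñ_X), ν(Ñ_Y))` is a normalized capacity on `X × Y`
belonging to `Π_Ch(μ, ν)`. -/
theorem piLower_mem_piCh {X Y : Type*} [Fintype X] [Fintype Y] [Nonempty X] [Nonempty Y]
    [DecidableEq X] [DecidableEq Y]
    (μ : Finset X → ℝ) (ν : Finset Y → ℝ)
    (hμ : IsNormalizedCapacity μ) (hν : IsNormalizedCapacity ν) :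
    IsNormalizedCapacity (fun N : Finset (X × Y) => max (μ (tprojX N)) (ν (tprojY N))) ∧
      InPiCh μ ν (fun N : Finset (X × Y) => max (μ (tprojX N)) (ν (tprojY N))) := by
  have hcap : IsCapacity (piLower μ ν) := isCapacity_piLower hμ.1 hν.1
  exact ⟨⟨hcap, piLower_univ hμ hν⟩, hcap, piLower_product_univ hμ hν,
    piLower_univ_product hμ hν⟩
end

section
/- Let X and Y be nonempty finite sets and let μ and ν be normalized capacities on X and Y respectively. Then for every π ∈ Π_Ch(μ,ν) and every N ⊆ X × Y, max(μ(Ñ_X), ν(Ñ_Y)) ≤ π(N) ≤ min(μ(N_X), ν(N_Y)); that is, π_*(N) = max(μ(Ñ_X), ν(Ñ_Y)) is the pointwise infimum and π^*(N) = min(μ(N_X), ν(N_Y)) is the pointwise supremum of π(N) over π ∈ Π_Ch(μ,ν). -/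
open Finset MeasureTheory

theorem IsCapacity.mono {Z : Type*} {γ : Finset Z → ℝ} (hγ : IsCapacity γ) {A B : Finset Z}
    (hAB : A ⊆ B) : γ A ≤ γ B :=
  hγ.2 A B hAB

section FullFiberProjections

variable {X Y : Type*} [Fintype X] [Fintype Y] [DecidableEq X] [DecidableEq Y]

theorem tprojX_product_univ_subset (N : Finset (X × Y)) : tprojX N ×ˢ univ ⊆ N := by
  rintro ⟨x, y⟩ h
  simp only [tprojX, mem_product, mem_filter] at h
  exact h.1.2 y

theorem univ_product_tprojY_subset (N : Finset (X × Y)) : univ ×ˢ tprojY N ⊆ N := by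
  rintro ⟨x, y⟩ h
  simp only [tprojY, mem_product, mem_filter] at h
  exact h.2.2 x

end FullFiberProjections

theorem subset_projX_product_univ {X Y : Type*} [Fintype Y] [DecidableEq X]
    (N : Finset (X × Y)) : N ⊆ projX N ×ˢ univ := fun _ hp =>
  mem_product.2 ⟨mem_image_of_mem Prod.fst hp, mem_univ _⟩

theorem subset_univ_product_projY {X Y : Type*} [Fintype X] [DecidableEq Y]
    (N : Finset (X × Y)) : N ⊆ univ ×ˢ projY N := fun _ hp =>
  mem_product.2 ⟨mem_univ _, mem_image_of_mem Prod.snd hp⟩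

namespace InPiCh

variable {X Y : Type*} [Fintype X] [Fintype Y] {μ : Finset X → ℝ} {ν : Finset Y → ℝ}
  {π : Finset (X × Y) → ℝ}

theorem max_le (hπ : InPiCh μ ν π) {A : Finset X} {B : Finset Y} {N : Finset (X × Y)}
    (hA : A ×ˢ univ ⊆ N) (hB : univ ×ˢ B ⊆ N) : max (μ A) (ν B) ≤ π N := by
  obtain ⟨hcap, hμ, hν⟩ := hπ
  exact _root_.max_le (hμ A ▸ hcap.mono hA) (hν B ▸ hcap.mono hB)

theorem le_min (hπ : InPiCh μ ν π) {A : Finset X} {B : Finset Y} {N : Finset (X × Y)}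
    (hA : N ⊆ A ×ˢ univ) (hB : N ⊆ univ ×ˢ B) : π N ≤ min (μ A) (ν B) := by
  obtain ⟨hcap, hμ, hν⟩ := hπ
  exact _root_.le_min (hμ A ▸ hcap.mono hA) (hν B ▸ hcap.mono hB)

end InPiCh

theorem piCh_pointwise_bounds_general {X Y : Type*} [Fintype X] [Fintype Y]
    [DecidableEq X] [DecidableEq Y]
    (μ : Finset X → ℝ) (ν : Finset Y → ℝ)
    (π : Finset (X × Y) → ℝ) (hπ : InPiCh μ ν π) (N : Finset (X × Y)) :
    max (μ (tprojX N)) (ν (tprojY N)) ≤ π N ∧ π N ≤ min (μ (projX N)) (ν (projY N)) :=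
  ⟨hπ.max_le (tprojX_product_univ_subset N) (univ_product_tprojY_subset N),
    hπ.le_min (subset_projX_product_univ N) (subset_univ_product_projY N)⟩

/-- every `π ∈ Π_Ch(μ, ν)` satisfies
`max(μ(Ñ_X), ν(Ñ_Y)) ≤ π(N) ≤ min(μ(N_X), ν(N_Y))` for every `N ⊆ X × Y`;
so `π_*` is the pointwise infimum and `π^*` the pointwise supremum over `Π_Ch(μ, ν)`. -/
theorem piCh_pointwise_bounds {X Y : Type*} [Fintype X] [Fintype Y] [Nonempty X] [Nonempty Y]
    [DecidableEq X] [DecidableEq Y]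
    (μ : Finset X → ℝ) (ν : Finset Y → ℝ)
    (hμ : IsNormalizedCapacity μ) (hν : IsNormalizedCapacity ν)
    (π : Finset (X × Y) → ℝ) (hπ : InPiCh μ ν π) (N : Finset (X × Y)) :
    max (μ (tprojX N)) (ν (tprojY N)) ≤ π N ∧ π N ≤ min (μ (projX N)) (ν (projY N)) :=
  piCh_pointwise_bounds_general μ ν π hπ N
end

section
/- Let X and Y be finite sets with |X| ≥ 2 and |Y| ≥ 2, and let μ and ν be normalized capacities on X and Y respectively. Then the core of π^* is empty, where π^*(N) = min(μ(N_X), ν(N_Y)) for N ⊆ X × Y. -/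
open Finset MeasureTheory

/-- Membership in the core of a capacity `γ`: a weight function `w`, identified with the
additive set function `A ↦ ∑ z ∈ A, w z`, dominating `γ` setwise and agreeing at `Z`. -/
def InCore {Z : Type*} [Fintype Z] (γ : Finset Z → ℝ) (w : Z → ℝ) : Prop :=
  (∀ A : Finset Z, γ A ≤ ∑ z ∈ A, w z) ∧ (∑ z : Z, w z) = γ Finset.univ

/-! Removing a single point from `X × Y` leaves both projections full, because `|X|, |Y| ≥ 2`,
so `π^*` does not drop. Hence every weight of a core element is nonpositive, contradicting
total weight `π^*(X × Y) = min(μ X, ν Y) = 1`. -/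

theorem InCore.apply_nonpos_of_erase_eq {Z : Type*} [Fintype Z] [DecidableEq Z]
    {γ : Finset Z → ℝ} {w : Z → ℝ} (hw : InCore γ w) {p : Z}
    (hp : γ (univ.erase p) = γ univ) : w p ≤ 0 := by
  have h := hw.1 (univ.erase p)
  rw [hp, ← hw.2, Finset.sum_erase_eq_sub (mem_univ p)] at h
  linarith

theorem not_inCore_of_erase_eq {Z : Type*} [Fintype Z] [DecidableEq Z] {γ : Finset Z → ℝ}
    (hpos : 0 < γ univ) (herase : ∀ p, γ (univ.erase p) = γ univ) (w : Z → ℝ) :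
    ¬ InCore γ w := by
  intro hw
  have hsum : ∑ z, w z ≤ 0 := sum_nonpos fun p _ => hw.apply_nonpos_of_erase_eq (herase p)
  linarith [hw.2]

section Projections

variable {X Y : Type*}

theorem projX_univ [Fintype X] [Fintype Y] [Nonempty Y] [DecidableEq X] :
    projX (univ : Finset (X × Y)) = univ := by
  ext x
  simp [projX]

theorem projY_univ [Fintype X] [Fintype Y] [Nonempty X] [DecidableEq Y] :
    projY (univ : Finset (X × Y)) = univ := by
  ext y
  simp [projY]

theorem projX_univ_erase [Fintype X] [Fintype Y] [DecidableEq X] [DecidableEq Y]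
    (hY : 1 < Fintype.card Y) (p : X × Y) : projX (univ.erase p) = univ := by
  refine eq_univ_of_forall fun x => mem_image.mpr ?_
  obtain ⟨y, hy⟩ := Fintype.exists_ne_of_one_lt_card hY p.2
  exact ⟨(x, y), mem_erase.mpr ⟨fun h => hy (congrArg Prod.snd h), mem_univ _⟩, rfl⟩

theorem projY_univ_erase [Fintype X] [Fintype Y] [DecidableEq X] [DecidableEq Y]
    (hX : 1 < Fintype.card X) (p : X × Y) : projY (univ.erase p) = univ := by
  refine eq_univ_of_forall fun y => mem_image.mpr ?_
  obtain ⟨x, hx⟩ := Fintype.exists_ne_of_one_lt_card hX p.1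
  exact ⟨(x, y), mem_erase.mpr ⟨fun h => hx (congrArg Prod.fst h), mem_univ _⟩, rfl⟩

end Projections

/-- if `|X| ≥ 2` and `|Y| ≥ 2`, then the core of
`π^*(N) = min(μ(N_X), ν(N_Y))` is empty. -/
theorem core_piUpper_empty {X Y : Type*} [Fintype X] [Fintype Y]
    [DecidableEq X] [DecidableEq Y]
    (hX : 2 ≤ Fintype.card X) (hY : 2 ≤ Fintype.card Y)
    (μ : Finset X → ℝ) (ν : Finset Y → ℝ)
    (hμ : IsNormalizedCapacity μ) (hν : IsNormalizedCapacity ν) :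
    ¬ ∃ w : X × Y → ℝ,
        InCore (fun N : Finset (X × Y) => min (μ (projX N)) (ν (projY N))) w := by
  have : Nonempty X := Fintype.card_pos_iff.mp (by omega)
  have : Nonempty Y := Fintype.card_pos_iff.mp (by omega)
  rintro ⟨w, hw⟩
  refine not_inCore_of_erase_eq ?_ (fun p => ?_) w hw
  · simp [projX_univ, projY_univ, hμ.2, hν.2]
  · rw [projX_univ_erase hY, projY_univ_erase hX, projX_univ, projY_univ]
end
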